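/- Let A and B be k-algebras carrying k-coalgebra structures, and let ψ : A⊗B → B⊗A be a bijective distributive law (i.e. ψ satisfies the multiplicativity axioms (a) and (b) of a weak distributive law, together with ψ(1_A⊗b)=b⊗1_A and ψ(a⊗1_B)=1_B⊗a for all a,b, and ψ is bijective). Then (ψ, ψ⁻¹) is a mutually weak inverse pair of weak distributive laws, and this pair is weakly comonoidal if and only if ψ is a homomorphism of k-coalgebras from the tensor product coalgebra A⊗B to the tensor product coalgebra B⊗A, i.e. Δ_{B⊗A}∘ψ = (ψ⊗ψ)∘Δ_{A⊗B} and ε_{B⊗A}∘ψ = ε_{A⊗B}. -/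

import Mathlib

open TensorProduct LinearMap

section WDL

variable (R : Type*) [CommRing R]

section AlgDefs

variable {A B : Type*} [Ring A] [Ring B] [Algebra R A] [Algebra R B]

/-- Weak distributive law axioms, stated pointwise on pure tensors. -/
def IsWeakDistLaw (ψ : A ⊗[R] B →ₗ[R] B ⊗[R] A) : Prop :=
  (∀ (a a' : A) (b : B), ψ ((a * a') ⊗ₜ[R] b) =
      lTensor B (mul' R A) ((TensorProduct.assoc R B A A)
        (rTensor A ψ ((TensorProduct.assoc R A B A).symm (a ⊗ₜ[R] ψ (a' ⊗ₜ[R] b)))))) ∧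
  (∀ (a : A) (b b' : B), ψ (a ⊗ₜ[R] (b * b')) =
      rTensor A (mul' R B) ((TensorProduct.assoc R B B A).symm
        (lTensor B ψ ((TensorProduct.assoc R B A B) (ψ (a ⊗ₜ[R] b) ⊗ₜ[R] b'))))) ∧
  (∀ b : B, ψ ((1 : A) ⊗ₜ[R] b) =
      rTensor A (mul' R B) ((TensorProduct.assoc R B B A).symm
        (b ⊗ₜ[R] ψ ((1 : A) ⊗ₜ[R] (1 : B))))) ∧
  (∀ a : A, ψ (a ⊗ₜ[R] (1 : B)) =
      lTensor B (mul' R A) ((TensorProduct.assoc R B A A)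
        (ψ ((1 : A) ⊗ₜ[R] (1 : B)) ⊗ₜ[R] a)))

/-- (Strict) distributive law axioms, stated pointwise on pure tensors. -/
def IsDistLaw (ψ : A ⊗[R] B →ₗ[R] B ⊗[R] A) : Prop :=
  (∀ (a a' : A) (b : B), ψ ((a * a') ⊗ₜ[R] b) =
      lTensor B (mul' R A) ((TensorProduct.assoc R B A A)
        (rTensor A ψ ((TensorProduct.assoc R A B A).symm (a ⊗ₜ[R] ψ (a' ⊗ₜ[R] b)))))) ∧
  (∀ (a : A) (b b' : B), ψ (a ⊗ₜ[R] (b * b')) =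
      rTensor A (mul' R B) ((TensorProduct.assoc R B B A).symm
        (lTensor B ψ ((TensorProduct.assoc R B A B) (ψ (a ⊗ₜ[R] b) ⊗ₜ[R] b'))))) ∧
  (∀ b : B, ψ ((1 : A) ⊗ₜ[R] b) = b ⊗ₜ[R] (1 : A)) ∧
  (∀ a : A, ψ (a ⊗ₜ[R] (1 : B)) = (1 : B) ⊗ₜ[R] a)

/-- `φ` is a weak inverse of `ψ`. -/
def IsWeakInverse (ψ : A ⊗[R] B →ₗ[R] B ⊗[R] A) (φ : B ⊗[R] A →ₗ[R] A ⊗[R] B) : Prop :=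
  (∀ (a : A) (b : B), ψ (φ (b ⊗ₜ[R] a)) =
      rTensor A (mul' R B) ((TensorProduct.assoc R B B A).symm
        (b ⊗ₜ[R] ψ (a ⊗ₜ[R] (1 : B))))) ∧
  (∀ (a : A) (b : B), φ (ψ (a ⊗ₜ[R] b)) =
      rTensor B (mul' R A) ((TensorProduct.assoc R A A B).symm
        (a ⊗ₜ[R] φ (b ⊗ₜ[R] (1 : A)))))

/-- The weak wreath product multiplication `(μ_B ⊗ μ_A) ∘ (id_B ⊗ ψ ⊗ id_A)`. -/
noncomputable def wreathMul (ψ : A ⊗[R] B →ₗ[R] B ⊗[R] A) :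
    (B ⊗[R] A) ⊗[R] (B ⊗[R] A) →ₗ[R] B ⊗[R] A :=
  TensorProduct.map (mul' R B) (mul' R A)
    ∘ₗ (TensorProduct.assoc R B B (A ⊗[R] A)).symm.toLinearMap
    ∘ₗ lTensor B (TensorProduct.assoc R B A A).toLinearMap
    ∘ₗ lTensor B (rTensor A ψ)
    ∘ₗ lTensor B (TensorProduct.assoc R A B A).symm.toLinearMap
    ∘ₗ (TensorProduct.assoc R B A (B ⊗[R] A)).toLinearMap

end AlgDefs

section CoalgDefs

variable {A B : Type*} [AddCommGroup A] [AddCommGroup B] [Module R A] [Module R B]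

/-- Tensor product comultiplication `(id ⊗ tw ⊗ id) ∘ (dA ⊗ dB)` built from the
comultiplication data `dA`, `dB`. -/
noncomputable def comulD (dA : A →ₗ[R] A ⊗[R] A) (dB : B →ₗ[R] B ⊗[R] B) :
    A ⊗[R] B →ₗ[R] (A ⊗[R] B) ⊗[R] (A ⊗[R] B) :=
  (TensorProduct.tensorTensorTensorComm R A A B B).toLinearMap ∘ₗ TensorProduct.map dA dB

/-- Tensor product counit `ε_A ⊗ ε_B`. -/
noncomputable def counitD (eA : A →ₗ[R] R) (eB : B →ₗ[R] R) : A ⊗[R] B →ₗ[R] R :=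
  (TensorProduct.lid R R).toLinearMap ∘ₗ TensorProduct.map eA eB

/-- The weakly comonoidal conditions for a mutually weak inverse pair `(ψ, φ)`,
with respect to comultiplication/counit data on `A` and `B`. -/
def IsWeaklyComonoidalD (ψ : A ⊗[R] B →ₗ[R] B ⊗[R] A) (φ : B ⊗[R] A →ₗ[R] A ⊗[R] B)
    (dA : A →ₗ[R] A ⊗[R] A) (dB : B →ₗ[R] B ⊗[R] B)
    (eA : A →ₗ[R] R) (eB : B →ₗ[R] R) : Prop :=
  (rTensor (B ⊗[R] A) (ψ ∘ₗ φ) ∘ₗ comulD R dB dA ∘ₗ ψ =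
      TensorProduct.map ψ ψ ∘ₗ comulD R dA dB) ∧
  (lTensor (B ⊗[R] A) (ψ ∘ₗ φ) ∘ₗ comulD R dB dA ∘ₗ ψ =
      TensorProduct.map ψ ψ ∘ₗ comulD R dA dB) ∧
  (rTensor (A ⊗[R] B) (φ ∘ₗ ψ) ∘ₗ comulD R dA dB ∘ₗ φ =
      TensorProduct.map φ φ ∘ₗ comulD R dB dA) ∧
  (lTensor (A ⊗[R] B) (φ ∘ₗ ψ) ∘ₗ comulD R dA dB ∘ₗ φ =
      TensorProduct.map φ φ ∘ₗ comulD R dB dA) ∧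
  (counitD R eB eA ∘ₗ ψ = counitD R eA eB ∘ₗ φ ∘ₗ ψ)

end CoalgDefs

section ComonClass

variable {A B : Type*} [AddCommGroup A] [AddCommGroup B] [Module R A] [Module R B]
  [Coalgebra R A] [Coalgebra R B]

/-- Tensor product comultiplication on `A ⊗ B` for coalgebras `A`, `B`. -/
noncomputable def comulTP : A ⊗[R] B →ₗ[R] (A ⊗[R] B) ⊗[R] (A ⊗[R] B) :=
  comulD R (Coalgebra.comul (R := R) (A := A)) (Coalgebra.comul (R := R) (A := B))

/-- Tensor product counit on `A ⊗ B` for coalgebras `A`, `B`. -/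
noncomputable def counitTP : A ⊗[R] B →ₗ[R] R :=
  counitD R (Coalgebra.counit (R := R) (A := A)) (Coalgebra.counit (R := R) (A := B))

end ComonClass

/-- Weakly comonoidal pair with respect to given coalgebra instances. -/
def IsWeaklyComonoidal {A B : Type*} [Ring A] [Ring B] [Algebra R A] [Algebra R B]
    [Coalgebra R A] [Coalgebra R B]
    (ψ : A ⊗[R] B →ₗ[R] B ⊗[R] A) (φ : B ⊗[R] A →ₗ[R] A ⊗[R] B) : Prop :=
  IsWeaklyComonoidalD R ψ φ (Coalgebra.comul (R := R) (A := A))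
    (Coalgebra.comul (R := R) (A := B)) (Coalgebra.counit (R := R) (A := A))
    (Coalgebra.counit (R := R) (A := B))

end WDL

/-- Data of a (possibly weak) bialgebra structure on a module `M`. -/
structure WBAData (R M : Type*) [CommRing R] [AddCommGroup M] [Module R M] where
  mul : M ⊗[R] M →ₗ[R] M
  one : M
  comul : M →ₗ[R] M ⊗[R] M
  counit : M →ₗ[R] R

namespace WBAData

variable {R M : Type*} [CommRing R] [AddCommGroup M] [Module R M] (d : WBAData R M)

/-- The induced multiplication of `M ⊗ M`. -/
noncomputable def mul2 : (M ⊗[R] M) ⊗[R] (M ⊗[R] M) →ₗ[R] M ⊗[R] M :=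
  TensorProduct.map d.mul d.mul ∘ₗ (TensorProduct.tensorTensorTensorComm R M M M M).toLinearMap

/-- The induced multiplication of `(M ⊗ M) ⊗ M`. -/
noncomputable def mul3 :
    ((M ⊗[R] M) ⊗[R] M) ⊗[R] ((M ⊗[R] M) ⊗[R] M) →ₗ[R] (M ⊗[R] M) ⊗[R] M :=
  TensorProduct.map d.mul2 d.mul ∘ₗ
    (TensorProduct.tensorTensorTensorComm R (M ⊗[R] M) M (M ⊗[R] M) M).toLinearMap

/-- Left multiplication by `a`. -/
noncomputable def lmul (a : M) : M →ₗ[R] M := d.mul ∘ₗ TensorProduct.mk R M M a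

/-- Right multiplication by `c`. -/
noncomputable def rmul (c : M) : M →ₗ[R] M := d.mul ∘ₗ (TensorProduct.mk R M M).flip c

/-- Convolution product of endomorphisms. -/
noncomputable def conv (f g : M →ₗ[R] M) : M →ₗ[R] M :=
  d.mul ∘ₗ TensorProduct.map f g ∘ₗ d.comul

/-- The projection `⊓^L : a ↦ ε(1₁a)1₂`. -/
noncomputable def piL : M →ₗ[R] M :=
  (TensorProduct.lid R M).toLinearMap
    ∘ₗ rTensor M (d.counit ∘ₗ d.mul ∘ₗ (TensorProduct.comm R M M).toLinearMap)
    ∘ₗ (TensorProduct.assoc R M M M).symm.toLinearMap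
    ∘ₗ (TensorProduct.mk R M (M ⊗[R] M)).flip (d.comul d.one)

/-- The projection `⊓^R : a ↦ 1₁ε(a1₂)`. -/
noncomputable def piR : M →ₗ[R] M :=
  (TensorProduct.rid R M).toLinearMap
    ∘ₗ lTensor M (d.counit ∘ₗ d.mul ∘ₗ (TensorProduct.comm R M M).toLinearMap)
    ∘ₗ (TensorProduct.assoc R M M M).toLinearMap
    ∘ₗ TensorProduct.mk R (M ⊗[R] M) M (d.comul d.one)

/-- The axioms of a weak bialgebra on the data `d`. -/
structure IsWeakBialgebra : Prop where
  mul_assoc : d.mul ∘ₗ rTensor M d.mul =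
      d.mul ∘ₗ lTensor M d.mul ∘ₗ (TensorProduct.assoc R M M M).toLinearMap
  one_mul : ∀ x : M, d.mul (d.one ⊗ₜ[R] x) = x
  mul_one : ∀ x : M, d.mul (x ⊗ₜ[R] d.one) = x
  coassoc : (TensorProduct.assoc R M M M).toLinearMap ∘ₗ rTensor M d.comul ∘ₗ d.comul
      = lTensor M d.comul ∘ₗ d.comul
  counit_left : ∀ x : M, (TensorProduct.lid R M) (rTensor M d.counit (d.comul x)) = x
  counit_right : ∀ x : M, (TensorProduct.rid R M) (lTensor M d.counit (d.comul x)) = x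
  comul_mul : d.comul ∘ₗ d.mul = d.mul2 ∘ₗ TensorProduct.map d.comul d.comul
  delta_one_left : d.mul3 ((d.comul d.one ⊗ₜ[R] d.one) ⊗ₜ[R]
      ((TensorProduct.assoc R M M M).symm (d.one ⊗ₜ[R] d.comul d.one)))
      = rTensor M d.comul (d.comul d.one)
  delta_one_right : d.mul3 (((TensorProduct.assoc R M M M).symm
      (d.one ⊗ₜ[R] d.comul d.one)) ⊗ₜ[R] (d.comul d.one ⊗ₜ[R] d.one))
      = rTensor M d.comul (d.comul d.one)
  counit_mul_left : ∀ a b c : M, (TensorProduct.lid R R) (TensorProduct.map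
      (d.counit ∘ₗ d.lmul a) (d.counit ∘ₗ d.rmul c) (d.comul b))
      = d.counit (d.mul (d.mul (a ⊗ₜ[R] b) ⊗ₜ[R] c))
  counit_mul_right : ∀ a b c : M, (TensorProduct.lid R R) (TensorProduct.map
      (d.counit ∘ₗ d.rmul c) (d.counit ∘ₗ d.lmul a) (d.comul b))
      = d.counit (d.mul (d.mul (a ⊗ₜ[R] b) ⊗ₜ[R] c))

/-- The axioms of a (genuine) bialgebra on the data `d`. -/
structure IsBialgebra : Prop where
  mul_assoc : d.mul ∘ₗ rTensor M d.mul =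
      d.mul ∘ₗ lTensor M d.mul ∘ₗ (TensorProduct.assoc R M M M).toLinearMap
  one_mul : ∀ x : M, d.mul (d.one ⊗ₜ[R] x) = x
  mul_one : ∀ x : M, d.mul (x ⊗ₜ[R] d.one) = x
  coassoc : (TensorProduct.assoc R M M M).toLinearMap ∘ₗ rTensor M d.comul ∘ₗ d.comul
      = lTensor M d.comul ∘ₗ d.comul
  counit_left : ∀ x : M, (TensorProduct.lid R M) (rTensor M d.counit (d.comul x)) = x
  counit_right : ∀ x : M, (TensorProduct.rid R M) (lTensor M d.counit (d.comul x)) = x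
  comul_mul : d.comul ∘ₗ d.mul = d.mul2 ∘ₗ TensorProduct.map d.comul d.comul
  comul_one : d.comul d.one = d.one ⊗ₜ[R] d.one
  counit_one : d.counit d.one = 1
  counit_mul : ∀ x y : M, d.counit (d.mul (x ⊗ₜ[R] y)) = d.counit x * d.counit y

/-- `S` is an antipode for the data `d`. -/
def IsAntipode (S : M →ₗ[R] M) : Prop :=
  d.conv LinearMap.id S = d.piL ∧ d.conv S LinearMap.id = d.piR ∧
    d.conv (d.conv S LinearMap.id) S = S

end WBAData

/-- The canonical weak-bialgebra data attached to an algebra-and-coalgebra `H`. -/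
noncomputable def algWBA (R H : Type*) [CommRing R] [Ring H] [Algebra R H] [Coalgebra R H] :
    WBAData R H :=
  { mul := LinearMap.mul' R H
    one := 1
    comul := Coalgebra.comul
    counit := Coalgebra.counit }

/-!
The inverse `φ` of a bijective distributive law `ψ` is again a distributive law: applying `ψ`
to the right-hand side of a multiplicativity axiom for `φ`, the corresponding axiom for `ψ`
cancels every `φ` and returns the left-hand side. For strict laws `ψ (1 ⊗ 1) = 1 ⊗ 1`, so the
weak unit and weak inverse conditions reduce to the strict ones. Since `ψ φ` and `φ ψ` are
identities, the weakly comonoidal conditions say that `ψ` and `φ` are comultiplicative and `ψ`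
counital, and `φ` is comultiplicative as soon as its inverse `ψ` is.
-/

section TensorMul

variable {R A M : Type*} [CommRing R] [Ring A] [Algebra R A] [AddCommGroup M] [Module R M]

lemma rTensor_mul'_assoc_symm_tmul (a : A) (v : A ⊗[R] M) :
    rTensor M (mul' R A) ((TensorProduct.assoc R A A M).symm (a ⊗ₜ[R] v)) =
      rTensor M (mulLeft R a) v := by
  induction v using TensorProduct.induction_on with
  | zero => simp
  | tmul x y => simp
  | add x y hx hy => simp only [tmul_add, map_add, hx, hy]

lemma lTensor_mul'_assoc_tmul (w : M ⊗[R] A) (a : A) :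
    lTensor M (mul' R A) ((TensorProduct.assoc R M A A) (w ⊗ₜ[R] a)) =
      lTensor M (mulRight R a) w := by
  induction w using TensorProduct.induction_on with
  | zero => simp
  | tmul x y => simp
  | add x y hx hy => simp only [add_tmul, map_add, hx, hy]

end TensorMul

section DistLaw

variable {R A B : Type*} [CommRing R] [Ring A] [Ring B] [Algebra R A] [Algebra R B]
  {ψ : A ⊗[R] B →ₗ[R] B ⊗[R] A} {φ : B ⊗[R] A →ₗ[R] A ⊗[R] B}

theorem IsDistLaw.isWeakDistLaw (hψ : IsDistLaw R ψ) : IsWeakDistLaw R ψ := by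
  obtain ⟨ha, hb, hc, hd⟩ := hψ
  refine ⟨ha, hb, fun b => ?_, fun a => ?_⟩
  · rw [hc, hc, rTensor_mul'_assoc_symm_tmul]
    simp
  · rw [hd, hc, lTensor_mul'_assoc_tmul]
    simp

lemma apply_mul_tmul_of_inverse
    (hb : ∀ (a : A) (b b' : B), ψ (a ⊗ₜ[R] (b * b')) =
      rTensor A (mul' R B) ((TensorProduct.assoc R B B A).symm
        (lTensor B ψ ((TensorProduct.assoc R B A B) (ψ (a ⊗ₜ[R] b) ⊗ₜ[R] b')))))
    (h1 : φ ∘ₗ ψ = LinearMap.id) (h2 : ψ ∘ₗ φ = LinearMap.id) (b b' : B) (a : A) :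
    φ ((b * b') ⊗ₜ[R] a) =
      lTensor A (mul' R B) ((TensorProduct.assoc R A B B)
        (rTensor B φ ((TensorProduct.assoc R B A B).symm (b ⊗ₜ[R] φ (b' ⊗ₜ[R] a))))) := by
  have hψφ : ∀ x, ψ (φ x) = x := LinearMap.congr_fun h2
  have hb_ext : ∀ (u : A ⊗[R] B) (b'' : B),
      ψ (lTensor A (mul' R B) ((TensorProduct.assoc R A B B) (u ⊗ₜ[R] b''))) =
        rTensor A (mul' R B) ((TensorProduct.assoc R B B A).symm
          (lTensor B ψ ((TensorProduct.assoc R B A B) (ψ u ⊗ₜ[R] b'')))) := by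
    intro u b''
    induction u using TensorProduct.induction_on with
    | zero => simp
    | tmul a b => simpa using hb a b b''
    | add x y hx hy => simp only [add_tmul, map_add, hx, hy]
  have key : ∀ t : A ⊗[R] B,
      ψ (lTensor A (mul' R B) ((TensorProduct.assoc R A B B)
        (rTensor B φ ((TensorProduct.assoc R B A B).symm (b ⊗ₜ[R] t))))) =
        rTensor A (mulLeft R b) (ψ t) := by
    intro t
    induction t using TensorProduct.induction_on with
    | zero => simp
    | tmul a' b'' =>
      rw [TensorProduct.assoc_symm_tmul, rTensor_tmul, hb_ext, hψφ, TensorProduct.assoc_tmul,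
        lTensor_tmul, rTensor_mul'_assoc_symm_tmul]
    | add x y hx hy => simp only [tmul_add, map_add, hx, hy]
  have := key (φ (b' ⊗ₜ[R] a))
  rw [hψφ, rTensor_tmul, mulLeft_apply] at this
  rw [← this, ← LinearMap.comp_apply φ ψ, h1, LinearMap.id_apply]

lemma apply_tmul_mul_of_inverse
    (ha : ∀ (a a' : A) (b : B), ψ ((a * a') ⊗ₜ[R] b) =
      lTensor B (mul' R A) ((TensorProduct.assoc R B A A)
        (rTensor A ψ ((TensorProduct.assoc R A B A).symm (a ⊗ₜ[R] ψ (a' ⊗ₜ[R] b))))))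
    (h1 : φ ∘ₗ ψ = LinearMap.id) (h2 : ψ ∘ₗ φ = LinearMap.id) (b : B) (a a' : A) :
    φ (b ⊗ₜ[R] (a * a')) =
      rTensor B (mul' R A) ((TensorProduct.assoc R A A B).symm
        (lTensor A φ ((TensorProduct.assoc R A B A) (φ (b ⊗ₜ[R] a) ⊗ₜ[R] a')))) := by
  have hψφ : ∀ x, ψ (φ x) = x := LinearMap.congr_fun h2
  have ha_ext : ∀ (a₀ : A) (v : A ⊗[R] B),
      ψ (rTensor B (mul' R A) ((TensorProduct.assoc R A A B).symm (a₀ ⊗ₜ[R] v))) =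
        lTensor B (mul' R A) ((TensorProduct.assoc R B A A)
          (rTensor A ψ ((TensorProduct.assoc R A B A).symm (a₀ ⊗ₜ[R] ψ v)))) := by
    intro a₀ v
    induction v using TensorProduct.induction_on with
    | zero => simp
    | tmul a b => simpa using ha a₀ a b
    | add x y hx hy => simp only [tmul_add, map_add, hx, hy]
  have key : ∀ t : A ⊗[R] B,
      ψ (rTensor B (mul' R A) ((TensorProduct.assoc R A A B).symm
        (lTensor A φ ((TensorProduct.assoc R A B A) (t ⊗ₜ[R] a'))))) =
        lTensor B (mulRight R a') (ψ t) := by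
    intro t
    induction t using TensorProduct.induction_on with
    | zero => simp
    | tmul a₀ b₀ =>
      rw [TensorProduct.assoc_tmul, lTensor_tmul, ha_ext, hψφ, TensorProduct.assoc_symm_tmul,
        rTensor_tmul, lTensor_mul'_assoc_tmul]
    | add x y hx hy => simp only [add_tmul, map_add, hx, hy]
  have := key (φ (b ⊗ₜ[R] a))
  rw [hψφ, lTensor_tmul, mulRight_apply] at this
  rw [← this, ← LinearMap.comp_apply φ ψ, h1, LinearMap.id_apply]

theorem IsDistLaw.of_inverse (hψ : IsDistLaw R ψ) (h1 : φ ∘ₗ ψ = LinearMap.id)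
    (h2 : ψ ∘ₗ φ = LinearMap.id) : IsDistLaw R φ := by
  obtain ⟨ha, hb, hc, hd⟩ := hψ
  have hφψ : ∀ x, φ (ψ x) = x := LinearMap.congr_fun h1
  refine ⟨apply_mul_tmul_of_inverse hb h1 h2, apply_tmul_mul_of_inverse ha h1 h2,
    fun a => ?_, fun b => ?_⟩
  · rw [← hd, hφψ]
  · rw [← hc, hφψ]

theorem IsWeakInverse.of_isDistLaw (hψ : IsDistLaw R ψ) (hφ : IsDistLaw R φ)
    (h1 : φ ∘ₗ ψ = LinearMap.id) (h2 : ψ ∘ₗ φ = LinearMap.id) : IsWeakInverse R ψ φ := by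
  refine ⟨fun a b => ?_, fun a b => ?_⟩
  · rw [← LinearMap.comp_apply ψ φ, h2, hψ.2.2.2, rTensor_mul'_assoc_symm_tmul]
    simp
  · rw [← LinearMap.comp_apply φ ψ, h1, hφ.2.2.2, rTensor_mul'_assoc_symm_tmul]
    simp

end DistLaw

section Comonoidal

variable {R M N : Type*} [CommRing R] [AddCommGroup M] [AddCommGroup N] [Module R M]
  [Module R N]

lemma LinearMap.comp_eq_map_comp_of_inverse {f : M →ₗ[R] N} {g : N →ₗ[R] M}
    {δM : M →ₗ[R] M ⊗[R] M} {δN : N →ₗ[R] N ⊗[R] N}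
    (hgf : g ∘ₗ f = LinearMap.id) (hfg : f ∘ₗ g = LinearMap.id)
    (h : δN ∘ₗ f = TensorProduct.map f f ∘ₗ δM) :
    δM ∘ₗ g = TensorProduct.map g g ∘ₗ δN :=
  calc δM ∘ₗ g = TensorProduct.map g g ∘ₗ TensorProduct.map f f ∘ₗ δM ∘ₗ g := by
        rw [← LinearMap.comp_assoc, ← TensorProduct.map_comp, hgf, TensorProduct.map_id,
          LinearMap.id_comp]
    _ = TensorProduct.map g g ∘ₗ δN ∘ₗ f ∘ₗ g := by
        rw [← LinearMap.comp_assoc g δM (TensorProduct.map f f), ← h, LinearMap.comp_assoc]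
    _ = TensorProduct.map g g ∘ₗ δN := by rw [hfg, LinearMap.comp_id]

variable {A B : Type*} [AddCommGroup A] [AddCommGroup B] [Module R A] [Module R B]

theorem isWeaklyComonoidalD_iff_of_inverse {ψ : A ⊗[R] B →ₗ[R] B ⊗[R] A}
    {φ : B ⊗[R] A →ₗ[R] A ⊗[R] B} (dA : A →ₗ[R] A ⊗[R] A) (dB : B →ₗ[R] B ⊗[R] B)
    (eA : A →ₗ[R] R) (eB : B →ₗ[R] R)
    (h1 : φ ∘ₗ ψ = LinearMap.id) (h2 : ψ ∘ₗ φ = LinearMap.id) :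
    IsWeaklyComonoidalD R ψ φ dA dB eA eB ↔
      comulD R dB dA ∘ₗ ψ = TensorProduct.map ψ ψ ∘ₗ comulD R dA dB ∧
        counitD R eB eA ∘ₗ ψ = counitD R eA eB := by
  simp only [IsWeaklyComonoidalD, h1, h2, rTensor_id, lTensor_id, LinearMap.id_comp,
    LinearMap.comp_id]
  constructor
  · rintro ⟨hcomul, -, -, -, hcounit⟩
    exact ⟨hcomul, hcounit⟩
  · rintro ⟨hcomul, hcounit⟩
    have hφ := LinearMap.comp_eq_map_comp_of_inverse h1 h2 hcomul
    exact ⟨hcomul, hcomul, hφ, hφ, hcounit⟩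

end Comonoidal

/-- an invertible distributive law together with its inverse is a
mutually weak inverse pair, which is weakly comonoidal iff the distributive law is a
coalgebra homomorphism. -/
theorem invertible_dist_law_weakly_comonoidal_iff
    {R A B : Type*} [CommRing R] [Ring A] [Ring B] [Algebra R A] [Algebra R B]
    [Coalgebra R A] [Coalgebra R B]
    (ψ : A ⊗[R] B →ₗ[R] B ⊗[R] A) (φ : B ⊗[R] A →ₗ[R] A ⊗[R] B)
    (hψ : IsDistLaw R ψ)
    (h1 : φ ∘ₗ ψ = LinearMap.id) (h2 : ψ ∘ₗ φ = LinearMap.id) :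
    IsWeakDistLaw R ψ ∧ IsWeakDistLaw R φ ∧ IsWeakInverse R ψ φ ∧
    (IsWeaklyComonoidal R ψ φ ↔
      (comulTP R (A := B) (B := A) ∘ₗ ψ =
          TensorProduct.map ψ ψ ∘ₗ comulTP R (A := A) (B := B) ∧
       counitTP R (A := B) (B := A) ∘ₗ ψ = counitTP R (A := A) (B := B))) := by
  have hφ : IsDistLaw R φ := hψ.of_inverse h1 h2
  exact ⟨hψ.isWeakDistLaw, hφ.isWeakDistLaw, .of_isDistLaw hψ hφ h1 h2,
    isWeaklyComonoidalD_iff_of_inverse _ _ _ _ h1 h2⟩
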